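/- arXiv:2005.08939 — 2 statements merged into one kernel-verified Lean document; each statement's English description precedes it below -/
import Mathlib

section
/- Let G_{i,j} = 1/g_{i+j+a} with g_n = p^{2n} binom(n+q/p, n), and L_{n,k} = (-1)^{n+k} p^{2k} binom(n+k+a+q/p-1, k) binom(n+a, k+a). Then for every n ≥ 2, the sum over k from 0 to n of L_{n,k} G_{k,n-2} equals 0. -/
/-- Generalized binomial coefficient `x(x-1)⋯(x-n+1)/n!` for rational `x`. -/
noncomputable def gchoose (x : ℚ) (n : ℕ) : ℚ :=
  (∏ i ∈ Finset.range n, (x - i)) / (n.factorial : ℚ)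

/-- The generalized Catalan numbers `g_n = p^{2n} binom(n + q/p, n)`. -/
noncomputable def gcat (p q : ℤ) (n : ℕ) : ℚ :=
  (p : ℚ) ^ (2 * n) * gchoose ((n : ℚ) + (q : ℚ) / (p : ℚ)) n

/-- The Hankel matrix entries `G_{i,j} = 1/g_{i+j+a}`. -/
noncomputable def Gmat (p q : ℤ) (a i j : ℕ) : ℚ :=
  1 / gcat p q (i + j + a)

/-- `L_{n,k} = (-1)^{n+k} p^{2k} binom(n+k+a+q/p-1, k) binom(n+a, k+a)`. -/
noncomputable def Lmat (p q : ℤ) (a n k : ℕ) : ℚ :=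
  (-1 : ℚ) ^ (n + k) * (p : ℚ) ^ (2 * k)
    * gchoose ((n : ℚ) + (k : ℚ) + (a : ℚ) + (q : ℚ) / (p : ℚ) - 1) k
    * gchoose ((n : ℚ) + (a : ℚ)) (k + a)

/-!
Cancelling the Pochhammer products in `g_{k+n-2+a}` against those in `L_{n,k}` leaves, up to a
factor independent of `k`, the term `(-1)^k binom(n+a, k+a) P(k)` with
`P(k) = (k+1)_{n-2+a} (k + q/p + n - 1 + a)`, a polynomial of degree `n - 1 + a`. Since `P`
vanishes at `-1, …, -a`, the sum is the full `(n+a)`-th forward difference of `P`, hence zero.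
-/

open Finset Polynomial

theorem sum_range_neg_one_pow_mul_choose_mul_eval_add_eq_zero {R : Type*} [CommRing R]
    (P : R[X]) {N : ℕ} (hP : P.natDegree < N) (y : R) :
    ∑ j ∈ range (N + 1), (-1) ^ j * (N.choose j : R) * P.eval (y + j) = 0 := by
  have h := fwdDiff_iter_eq_sum_shift 1 P.eval N y
  rw [fwdDiff_iter_eq_zero_of_degree_lt hP] at h
  simp only [Pi.zero_apply, nsmul_eq_mul, mul_one, zsmul_eq_mul] at h
  rw [← neg_one_pow_mul_eq_zero_iff (n := N), mul_sum, h]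
  refine sum_congr rfl fun j hj => ?_
  have hj : j ≤ N := Nat.lt_succ_iff.mp (mem_range.mp hj)
  have hsign : (-1 : R) ^ N * (-1) ^ j = (-1) ^ (N - j) := by
    rw [← Nat.sub_add_cancel hj, pow_add, mul_assoc, ← mul_pow, neg_one_mul, neg_neg, one_pow,
      mul_one, Nat.add_sub_cancel]
  push_cast
  rw [← hsign]
  ring

theorem sum_range_neg_one_pow_mul_choose_add_mul_eval_eq_zero {R : Type*} [CommRing R]
    (P : R[X]) {a M : ℕ} (hP : P.natDegree < a + M)
    (hroots : ∀ j < a, P.eval ((j : R) - a) = 0) :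
    ∑ k ∈ range (M + 1), (-1) ^ k * ((a + M).choose (a + k) : R) * P.eval (k : R) = 0 := by
  have h := sum_range_neg_one_pow_mul_choose_mul_eval_add_eq_zero P hP (-a)
  rw [add_assoc, sum_range_add, sum_eq_zero fun j hj => ?_, zero_add] at h
  · rw [← neg_one_pow_mul_eq_zero_iff (n := a), mul_sum, ← h]
    refine sum_congr rfl fun k _ => ?_
    push_cast
    ring_nf
  · rw [neg_add_eq_sub, hroots j (mem_range.mp hj), mul_zero]

theorem ascPochhammer_natDegree_le (R : Type*) [Semiring R] (n : ℕ) :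
    (ascPochhammer R n).natDegree ≤ n := by
  rw [← ascPochhammer_map (Nat.castRingHom R)]
  exact natDegree_map_le.trans (ascPochhammer_natDegree ℕ n).le

theorem ascPochhammer_eval_mul_eval_add {R : Type*} [CommSemiring R] (n k : ℕ) (y : R) :
    (ascPochhammer R n).eval y * (ascPochhammer R k).eval (y + n)
      = (ascPochhammer R (n + k)).eval y := by
  rw [← ascPochhammer_mul, eval_mul, eval_comp]
  simp

theorem sum_range_neg_one_pow_mul_choose_mul_ascPochhammer_eq_zero {R : Type*} [CommRing R]
    (a m : ℕ) (c : R) :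
    ∑ k ∈ range (m + 3), (-1) ^ k * ((a + (m + 2)).choose (a + k) : R)
      * ((ascPochhammer R (m + a)).eval ((k : R) + 1) * (k + c)) = 0 := by
  have hdeg : ((ascPochhammer R (m + a)).comp (X + 1) * (X + C c)).natDegree < a + (m + 2) := by
    have hpoch := Nat.mul_le_mul (ascPochhammer_natDegree_le R (m + a))
      (show (X + 1 : R[X]).natDegree ≤ 1 by compute_degree)
    have hlin : (X + C c).natDegree ≤ 1 := by compute_degree
    have := natDegree_mul_le.trans (add_le_add (natDegree_comp_le.trans hpoch) hlin)
    omega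
  have hroots (j : ℕ) (hj : j < a) :
      ((ascPochhammer R (m + a)).comp (X + 1) * (X + C c)).eval ((j : R) - a) = 0 := by
    have : (j : R) - a + 1 = -((a - 1 - j : ℕ) : R) := by
      rw [Nat.cast_sub (by omega), Nat.cast_sub (by omega)]
      push_cast
      ring
    rw [eval_mul, eval_comp, eval_add, eval_X, eval_one, this,
      ascPochhammer_eval_neg_coe_nat_of_lt (by omega), zero_mul]
  simpa using sum_range_neg_one_pow_mul_choose_add_mul_eval_eq_zero _ hdeg hroots

theorem gchoose_eq_descPochhammer_eval_div (x : ℚ) (n : ℕ) :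
    gchoose x n = (descPochhammer ℚ n).eval x / n.factorial := by
  rw [descPochhammer_eval_eq_prod_range]
  rfl

theorem gchoose_natCast (N j : ℕ) : gchoose N j = N.choose j := by
  rw [gchoose_eq_descPochhammer_eval_div, Nat.cast_choose_eq_descPochhammer_div]

theorem gchoose_eq_ascPochhammer_eval_div (x : ℚ) (n : ℕ) :
    gchoose x n = (ascPochhammer ℚ n).eval (x - n + 1) / n.factorial := by
  rw [gchoose_eq_descPochhammer_eval_div, descPochhammer_eval_eq_ascPochhammer]

theorem gcat_eq_ascPochhammer (p q : ℤ) (n : ℕ) :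
    gcat p q n
      = (p : ℚ) ^ (2 * n) * ((ascPochhammer ℚ n).eval ((q : ℚ) / p + 1) / n.factorial) := by
  rw [gcat, gchoose_eq_ascPochhammer_eval_div, add_sub_cancel_left]

theorem Lmat_mul_Gmat (p q : ℤ) (a m k : ℕ) (hg : ∀ n, gcat p q n ≠ 0) :
    Lmat p q a (m + 2) k * Gmat p q a k m
      = (-1) ^ m
          / ((p : ℚ) ^ (2 * (m + a)) * (ascPochhammer ℚ (m + a + 1)).eval ((q : ℚ) / p + 1))
        * ((-1) ^ k * ((a + (m + 2)).choose (a + k) : ℚ)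
          * ((ascPochhammer ℚ (m + a)).eval ((k : ℚ) + 1) * (k + ((q : ℚ) / p + (m + a) + 1)))) := by
  have hA (n : ℕ) : (ascPochhammer ℚ n).eval ((q : ℚ) / p + 1) ≠ 0 := fun h => hg n (by
    rw [gcat_eq_ascPochhammer, h, zero_div, mul_zero])
  have hp : (p : ℚ) ≠ 0 := fun h => hg 1 (by rw [gcat_eq_ascPochhammer, h]; simp)
  unfold Lmat Gmat
  rw [gcat_eq_ascPochhammer, show k + m + a = m + a + k by ring]
  generalize (q : ℚ) / p = x at *
  have hfirst : gchoose (((m + 2 : ℕ) : ℚ) + k + a + x - 1) k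
      = (ascPochhammer ℚ k).eval (x + 1 + (m + a + 1 : ℕ)) / k.factorial := by
    rw [gchoose_eq_ascPochhammer_eval_div]
    push_cast
    ring_nf
  have hsecond : gchoose (((m + 2 : ℕ) : ℚ) + a) (k + a) = (a + (m + 2)).choose (a + k) := by
    rw [← gchoose_natCast]
    push_cast
    ring_nf
  have hprod : (ascPochhammer ℚ k).eval (x + 1 + (m + a + 1 : ℕ))
      = (ascPochhammer ℚ (m + a + k)).eval (x + 1) * (x + 1 + (m + a + k : ℕ))
        / (ascPochhammer ℚ (m + a + 1)).eval (x + 1) := by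
    rw [eq_div_iff (hA _), mul_comm, ascPochhammer_eval_mul_eval_add, ← ascPochhammer_succ_eval]
    ring_nf
  have hfact : ((m + a + k).factorial : ℚ)
      = k.factorial * (ascPochhammer ℚ (m + a)).eval ((k : ℚ) + 1) := by
    rw [factorial_mul_ascPochhammer, add_comm k]
  rw [hfirst, hsecond, hprod, hfact]
  field_simp [hA, hp]
  push_cast
  ring

theorem catbert_orthogonal_two_general (p q : ℤ) (a : ℕ)
    (hg : ∀ m : ℕ, gcat p q m ≠ 0) (n : ℕ) (hn : 2 ≤ n) :
    ∑ k ∈ Finset.range (n + 1), Lmat p q a n k * Gmat p q a k (n - 2) = 0 := by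
  obtain ⟨m, rfl⟩ := Nat.exists_eq_add_of_le' hn
  rw [Nat.add_sub_cancel, sum_congr rfl fun k _ => Lmat_mul_Gmat p q a m k hg, ← mul_sum,
    sum_range_neg_one_pow_mul_choose_mul_ascPochhammer_eq_zero, mul_zero]

theorem catbert_orthogonal_two (p q : ℤ) (a : ℕ) (hp : 2 ≤ p) (hq : Int.gcd p q = 1)
    (hg : ∀ m : ℕ, gcat p q m ≠ 0) (n : ℕ) (hn : 2 ≤ n) :
    ∑ k ∈ Finset.range (n + 1), Lmat p q a n k * Gmat p q a k (n - 2) = 0 :=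
  catbert_orthogonal_two_general p q a hg n hn
end

section
/- For any integers n and k with n ≡ 2 (mod 3), k ≡ 2 (mod 3), k > 0, the integer 4^k binom(n + k - 3/2, k) is divisible by 3. -/
open Finset

namespace Ring

variable {R : Type*} [NonAssocRing R] [Pow R ℕ] [BinomialRing R] [NatPowAssoc R]

theorem succ_mul_choose_succ (r : R) (k : ℕ) :
    ((k + 1 : ℕ) : R) * choose r (k + 1) = choose r k * (r - k) := by
  have := choose_smul_choose r (Nat.le_add_right k 1)
  rwa [Nat.choose_succ_self_right, Nat.add_sub_cancel_left, choose_one_right, nsmul_eq_mul] at this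

theorem succ_mul_choose_succ_eq_mul_choose (r : R) (k : ℕ) :
    ((k + 1 : ℕ) : R) * choose r (k + 1) = r * choose (r - 1) k := by
  have := choose_smul_choose r (Nat.le_add_left 1 k)
  rwa [Nat.choose_one_right, Nat.add_sub_cancel, choose_one_right, nsmul_eq_mul,
    Nat.cast_one] at this

end Ring

theorem Ring.intCast_choose {R : Type*} [Ring R] [BinomialRing R] (m : ℤ) (j : ℕ) :
    ((Ring.choose m j : ℤ) : R) = Ring.choose (m : R) j := by
  simpa using Ring.map_choose (Int.castRingHom R) m j

theorem Int.dvd_choose_of_dvd_of_not_dvd {p m : ℤ} (hp : Prime p) (hm : p ∣ m) {j : ℕ}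
    (hj : ¬ p ∣ j) : p ∣ Ring.choose m j := by
  obtain _ | ⟨k⟩ := j
  · simp at hj
  · have hdvd : p ∣ ((k + 1 : ℕ) : ℤ) * Ring.choose m (k + 1) := by
      rw [Ring.succ_mul_choose_succ_eq_mul_choose]
      exact hm.mul_right _
    exact (hp.dvd_or_dvd hdvd).resolve_left hj

theorem Nat.Prime.dvd_choose_of_mod_lt {p a b : ℕ} (hp : p.Prime) (h : a % p < b % p) :
    p ∣ a.choose b := by
  have := Fact.mk hp
  have lucas := Choose.choose_modEq_choose_mod_mul_choose_div_nat (p := p) (n := a) (k := b)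
  rwa [Nat.choose_eq_zero_of_lt h, zero_mul, Nat.modEq_zero_iff_dvd] at lucas

theorem gchoose_eq_choose (x : ℚ) (n : ℕ) : gchoose x n = Ring.choose x n := by
  rw [Ring.choose_eq_smul, gchoose, smul_eq_mul, inv_mul_eq_div,
    ← descPochhammer_eval_eq_prod_range, ← Polynomial.aeval_eq_smeval,
    ← Polynomial.eval_map_algebraMap, descPochhammer_map]

theorem four_pow_mul_choose_neg_half (k : ℕ) :
    (4 : ℚ) ^ k * Ring.choose (-1 / 2 : ℚ) k = (-1) ^ k * k.centralBinom := by
  induction k with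
  | zero => simp
  | succ k ih =>
    have hc : ((k + 1 : ℕ) : ℚ) * (k + 1).centralBinom = 2 * (2 * k + 1) * k.centralBinom := by
      exact_mod_cast Nat.succ_mul_centralBinom_succ k
    apply mul_left_cancel₀ (by positivity : ((k + 1 : ℕ) : ℚ) ≠ 0)
    rw [mul_left_comm, Ring.succ_mul_choose_succ]
    linear_combination (-2 * (2 * k + 1) : ℚ) * ih + (-1) ^ k * hc

theorem four_pow_mul_choose_sub_half (m : ℤ) (k : ℕ) :
    (4 : ℚ) ^ k * Ring.choose ((m : ℚ) - 1 / 2) k =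
      ((∑ ij ∈ antidiagonal k, 4 ^ ij.1 * Ring.choose m ij.1 * ((-1) ^ ij.2 * ij.2.centralBinom)
        : ℤ) : ℚ) := by
  rw [sub_eq_add_neg, Ring.add_choose_eq k (Commute.all _ _), mul_sum]
  push_cast
  refine sum_congr rfl fun ij hij => ?_
  rw [← HasAntidiagonal.mem_antidiagonal.mp hij, ← neg_div, ← four_pow_mul_choose_neg_half,
    pow_add, Ring.intCast_choose]
  ring

theorem lucas_variant_two_general (n : ℤ) (k : ℕ) (hn : n % 3 = 2) (hk3 : (k : ℤ) % 3 = 2) :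
    ∃ m : ℤ, (4 : ℚ) ^ k * gchoose ((n : ℚ) + (k : ℚ) - 3 / 2) k = (m : ℚ)
      ∧ (3 : ℤ) ∣ m := by
  rw [gchoose_eq_choose,
    show (n : ℚ) + k - 3 / 2 = ((n + k - 1 : ℤ) : ℚ) - 1 / 2 by push_cast; ring]
  refine ⟨_, four_pow_mul_choose_sub_half (n + k - 1) k, dvd_sum ?_⟩
  rintro ⟨i, j⟩ hij
  rw [HasAntidiagonal.mem_antidiagonal] at hij
  by_cases hi : (3 : ℤ) ∣ i
  · have hj : 3 ∣ j.centralBinom := Nat.prime_three.dvd_choose_of_mod_lt (by omega)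
    exact ((Int.natCast_dvd_natCast.mpr hj).mul_left _).mul_left _
  · have hchoose := Int.dvd_choose_of_dvd_of_not_dvd (m := n + k - 1) Int.prime_three (by omega) hi
    exact (hchoose.mul_left _).mul_right _

/-- If `n ≡ 2 (mod 3)`, `k ≡ 2 (mod 3)`, `k > 0`, then `4^k binom(n+k-3/2, k)`
is an integer divisible by `3`. -/
theorem lucas_variant_two (n : ℤ) (k : ℕ) (hn : n % 3 = 2) (hk3 : (k : ℤ) % 3 = 2)
    (hk : 0 < k) :
    ∃ m : ℤ, (4 : ℚ) ^ k * gchoose ((n : ℚ) + (k : ℚ) - 3 / 2) k = (m : ℚ)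
      ∧ (3 : ℤ) ∣ m :=
  lucas_variant_two_general n k hn hk3
end
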